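/- For every real x with 0 ≤ x ≤ π, sin(x) ≤ (4/π²) · x · (π − x). -/

import Mathlib

/-! With `t = x - π / 2` the claim becomes `cos t ≤ 1 - 4 t² / π²` for `|t| ≤ π / 2`. Since
`1 - cos t = 2 sin² (t / 2)`, it suffices that `sin u ≥ (2√2 / π) u` on `[0, π / 4]`, which is
concavity of `sin`: on `[0, π / 4]` it lies above its chord through `(π / 4, √2 / 2)`. -/

open Real

theorem mul_sin_le_sin_mul {a s : ℝ} (ha₀ : 0 ≤ a) (ha : a ≤ π) (hs₀ : 0 ≤ s) (hs : s ≤ 1) :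
    s * sin a ≤ sin (s * a) := by
  simpa using strictConcaveOn_sin_Icc.concaveOn.2 ⟨le_rfl, pi_pos.le⟩ ⟨ha₀, ha⟩
    (sub_nonneg.2 hs) hs₀ (sub_add_cancel 1 s)

theorem two_mul_sqrt_two_div_pi_mul_le_sin {u : ℝ} (hu₀ : 0 ≤ u) (hu : u ≤ π / 4) :
    2 * √2 / π * u ≤ sin u := by
  have hchord := mul_sin_le_sin_mul (a := π / 4) (s := 4 / π * u) (by positivity)
    (by linarith [pi_pos]) (by positivity) (by rw [← le_div_iff₀' (by positivity)]; linarith)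
  calc 2 * √2 / π * u = 4 / π * u * sin (π / 4) := by rw [sin_pi_div_four]; ring
    _ ≤ sin (4 / π * u * (π / 4)) := hchord
    _ = sin u := by field_simp

theorem cos_le_one_sub_four_div_pi_sq_mul_sq {t : ℝ} (ht : |t| ≤ π / 2) :
    cos t ≤ 1 - 4 / π ^ 2 * t ^ 2 := by
  have hsin : 2 * √2 / π * (|t| / 2) ≤ sin (|t| / 2) :=
    two_mul_sqrt_two_div_pi_mul_le_sin (by positivity) (by linarith)
  have hsin_sq : 2 / π ^ 2 * t ^ 2 ≤ sin (|t| / 2) ^ 2 :=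
    calc 2 / π ^ 2 * t ^ 2 = (2 * √2 / π * (|t| / 2)) ^ 2 := by
          rw [mul_pow, div_pow, mul_pow, sq_sqrt zero_le_two, div_pow, sq_abs]; ring
      _ ≤ sin (|t| / 2) ^ 2 := pow_le_pow_left₀ (by positivity) hsin 2
  calc cos t = cos (2 * (|t| / 2)) := by rw [mul_div_cancel₀ _ two_ne_zero, cos_abs]
    _ = 1 - 2 * sin (|t| / 2) ^ 2 := cos_two_mul_eq_one_sub _
    _ ≤ 1 - 4 / π ^ 2 * t ^ 2 := by linear_combination 2 * hsin_sq

theorem sin_le_quadratic (x : ℝ) (hx0 : 0 ≤ x) (hxπ : x ≤ π) :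
    Real.sin x ≤ 4 / π ^ 2 * x * (π - x) := by
  have h := cos_le_one_sub_four_div_pi_sq_mul_sq (t := x - π / 2)
    (abs_le.2 ⟨by linarith, by linarith⟩)
  rw [cos_sub_pi_div_two] at h
  convert h using 1
  field_simp
  ring
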